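/- Perfect secrecy requires the key space to be at least as large as the message space: if for all m, m' and all c, Pr_k[Enc(k,m)=c] = Pr_k[Enc(k,m')=c], and decryption correctness holds (Dec(k,Enc(k,m)) = m), then |K| ≥ |M|. -/

import Mathlib

open Finset

theorem sum_ite_pos_iff_exists {ι : Type*} [Fintype ι] {p : ι → ℝ} (hp : ∀ i, 0 < p i)
    (P : ι → Prop) [DecidablePred P] :
    0 < ∑ i, (if P i then p i else 0) ↔ ∃ i, P i := by
  rw [Finset.sum_pos_iff_of_nonneg fun i _ => by split_ifs <;> simp [(hp i).le]]
  simp only [mem_univ, true_and]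
  exact exists_congr fun i => by split_ifs with h <;> simp [h, hp i]

/-- Decryption recovers the message from its key, so keys encrypting distinct messages to the
same ciphertext are distinct. -/
theorem card_le_of_forall_exists_encrypt_eq {K M C : Type*} [Fintype K] [Fintype M]
    (Enc : K → M → C) (Dec : K → C → M) (hcorrect : ∀ k m, Dec k (Enc k m) = m) (c : C)
    (hreach : ∀ m, ∃ k, Enc k m = c) :
    Fintype.card M ≤ Fintype.card K := by
  choose key hkey using hreach
  refine Fintype.card_le_of_injective key fun m m' h => ?_
  calc m = Dec (key m) (Enc (key m) m) := (hcorrect _ _).symm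
    _ = Dec (key m') c := by rw [hkey, h]
    _ = m' := by rw [← hkey m', hcorrect]

theorem shannon_key_space_bound_general
    {K M C : Type*} [Fintype K] [Fintype M] [DecidableEq C]
    (Enc : K → M → C) (Dec : K → C → M)
    (hcorrect : ∀ (k : K) (m : M), Dec k (Enc k m) = m)
    (p : K → ℝ) (hp0 : ∀ k, 0 < p k) (hp1 : ∑ k : K, p k = 1)
    (hsecrecy : ∀ (m m' : M) (c : C),
      (∑ k : K, if Enc k m = c then p k else 0)
        = (∑ k : K, if Enc k m' = c then p k else 0)) :
    Fintype.card M ≤ Fintype.card K := by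
  rcases isEmpty_or_nonempty M with hM | ⟨⟨m₀⟩⟩
  · simp
  obtain ⟨k₀⟩ : Nonempty K := by
    by_contra hK
    simp [not_nonempty_iff.mp hK] at hp1
  -- The ciphertext `Enc k₀ m₀` has positive probability under `m₀`, hence under every message.
  refine card_le_of_forall_exists_encrypt_eq Enc Dec hcorrect (Enc k₀ m₀) fun m => ?_
  rw [← sum_ite_pos_iff_exists hp0, hsecrecy m m₀, sum_ite_pos_iff_exists hp0]
  exact ⟨k₀, rfl⟩

/-- Shannon's bound: perfect secrecy plus decryption correctness requires
the key space to be at least as large as the message space. -/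
theorem shannon_key_space_bound
    {K M C : Type*} [Fintype K] [Fintype M] [Fintype C] [DecidableEq C]
    (Enc : K → M → C) (Dec : K → C → M)
    (hcorrect : ∀ (k : K) (m : M), Dec k (Enc k m) = m)
    (p : K → ℝ) (hp0 : ∀ k, 0 < p k) (hp1 : ∑ k : K, p k = 1)
    (hsecrecy : ∀ (m m' : M) (c : C),
      (∑ k : K, if Enc k m = c then p k else 0)
        = (∑ k : K, if Enc k m' = c then p k else 0)) :
    Fintype.card M ≤ Fintype.card K :=
  shannon_key_space_bound_general Enc Dec hcorrect p hp0 hp1 hsecrecy
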